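/- Let p1 and p2 be non-constant bivariate complex polynomials with p1(0,0) = p2(0,0) = 1, of bidegrees n' = (n1',n2') and n'' = (n1'',n2'') respectively. Suppose there exist matrices K1 of size (n1'+n2')×(n1'+n2') with ‖K1‖ = s(p1)^{-1} and p1(z1,z2) = det(I − K1 Z_{n'}(z1,z2)), and K2 of size (n1''+n2'')×(n1''+n2'') with ‖K2‖ = s(p2)^{-1} and p2(z1,z2) = det(I − K2 Z_{n''}(z1,z2)). Then, with m = n' + n'' = (n1'+n1'', n2'+n2''), there exists a matrix K of size (n1'+n1''+n2'+n2'') with ‖K‖ = s(p1p2)^{-1} such that p1(z1,z2)·p2(z1,z2) = det(I − K Z_m(z1,z2)) for all (z1,z2) ∈ ℂ². -/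

import Mathlib

open MvPolynomial

noncomputable def opNorm {m : ℕ} (K : Matrix (Fin m) (Fin m) ℂ) : ℝ :=
  ‖Matrix.toEuclideanCLM (𝕜 := ℂ) K‖

noncomputable def Zn (n1 n2 : ℕ) (z1 z2 : ℂ) : Matrix (Fin (n1 + n2)) (Fin (n1 + n2)) ℂ :=
  Matrix.diagonal fun i => if (i : ℕ) < n1 then z1 else z2

noncomputable def stabilityRadius (p : MvPolynomial (Fin 2) ℂ) : ℝ :=
  sSup {r : ℝ | 0 < r ∧ ∀ z1 z2 : ℂ, ‖z1‖ < r → ‖z2‖ < r →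
    eval ![z1, z2] p ≠ 0}

/-!
The matrix for `p1 * p2` is the block-diagonal matrix `K1 ⊕ K2`, with rows and columns permuted
so that the `z1`-coordinates of both blocks come first. Then `det (I - K Z_m)` factors as the
product of the two determinants, and the operator norm of a block-diagonal matrix is the maximum
of the norms of its blocks. On the other side, the set of stable radii of `p1 * p2` is the
intersection of those of `p1` and `p2`, both initial segments of `(0, ∞)`, so
`s(p1 p2) = min (s(p1), s(p2))` and `s(p1 p2)⁻¹ = max (s(p1)⁻¹, s(p2)⁻¹)`.
-/

open Matrix Set WithLp
open scoped Matrix.Norms.L2Operator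

namespace Matrix

variable {𝕜 : Type*} [RCLike 𝕜] {m n m' n' : Type*} [Fintype m] [Fintype n] [Fintype m']
  [Fintype n']

lemma l2_opNorm_le_iff [DecidableEq n] {A : Matrix m n 𝕜} {c : ℝ} (hc : 0 ≤ c) :
    ‖A‖ ≤ c ↔ ∀ x : n → 𝕜, ‖toLp 2 (A *ᵥ x)‖ ^ 2 ≤ c ^ 2 * ‖toLp 2 x‖ ^ 2 := by
  rw [l2_opNorm_def, ContinuousLinearMap.opNorm_le_iff hc, (WithLp.equiv 2 _).forall_congr_left]
  refine forall_congr' fun x => ?_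
  rw [← mul_pow, sq_le_sq₀ (norm_nonneg _) (by positivity)]
  rfl

lemma norm_sq_toLp_mulVec_le [DecidableEq n] (A : Matrix m n 𝕜) (x : n → 𝕜) :
    ‖toLp 2 (A *ᵥ x)‖ ^ 2 ≤ ‖A‖ ^ 2 * ‖toLp 2 x‖ ^ 2 :=
  (l2_opNorm_le_iff (norm_nonneg A)).1 le_rfl x

lemma norm_sq_toLp_sumElim (u : m → 𝕜) (w : n → 𝕜) :
    ‖toLp 2 (Sum.elim u w)‖ ^ 2 = ‖toLp 2 u‖ ^ 2 + ‖toLp 2 w‖ ^ 2 := by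
  simp only [EuclideanSpace.norm_sq_eq, Fintype.sum_sum_type, Sum.elim_inl, Sum.elim_inr]

lemma l2_opNorm_reindex [DecidableEq n] [DecidableEq n'] (e₁ : m ≃ m') (e₂ : n ≃ n')
    (A : Matrix m n 𝕜) : ‖reindex e₁ e₂ A‖ = ‖A‖ := by
  set L₁ := LinearIsometryEquiv.piLpCongrLeft 2 𝕜 𝕜 e₁
  set L₂ := LinearIsometryEquiv.piLpCongrLeft 2 𝕜 𝕜 e₂
  have hconj : toEuclideanLin.trans LinearMap.toContinuousLinearMap (reindex e₁ e₂ A) =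
      (L₁.toLinearIsometry.toContinuousLinearMap.comp
        (toEuclideanLin.trans LinearMap.toContinuousLinearMap A)).comp
        (L₂.symm : EuclideanSpace 𝕜 n' →L[𝕜] EuclideanSpace 𝕜 n) := by
    ext x i
    simp [L₁, L₂, mulVec, dotProduct, Equiv.piCongrLeft']
  rw [l2_opNorm_def, l2_opNorm_def, hconj,
    ContinuousLinearMap.opNorm_comp_linearIsometryEquiv,
    L₁.toLinearIsometry.norm_toContinuousLinearMap_comp]

lemma l2_opNorm_fromBlocks_zero [DecidableEq m'] [DecidableEq n'] (A : Matrix m m' 𝕜)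
    (B : Matrix n n' 𝕜) : ‖fromBlocks A 0 0 B‖ = max ‖A‖ ‖B‖ := by
  have hmulVec (u : m' → 𝕜) (w : n' → 𝕜) :
      fromBlocks A 0 0 B *ᵥ Sum.elim u w = Sum.elim (A *ᵥ u) (B *ᵥ w) := by
    simp [fromBlocks_mulVec]
  refine le_antisymm ((l2_opNorm_le_iff (by positivity)).2 fun x => ?_) (max_le ?_ ?_)
  · rw [← Sum.elim_comp_inl_inr x, hmulVec, norm_sq_toLp_sumElim, norm_sq_toLp_sumElim]
    have hA : ‖A‖ ^ 2 ≤ max ‖A‖ ‖B‖ ^ 2 := by gcongr; exact le_max_left _ _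
    have hB : ‖B‖ ^ 2 ≤ max ‖A‖ ‖B‖ ^ 2 := by gcongr; exact le_max_right _ _
    calc _ ≤ ‖A‖ ^ 2 * ‖toLp 2 (x ∘ Sum.inl)‖ ^ 2 + ‖B‖ ^ 2 * ‖toLp 2 (x ∘ Sum.inr)‖ ^ 2 :=
          add_le_add (norm_sq_toLp_mulVec_le _ _) (norm_sq_toLp_mulVec_le _ _)
      _ ≤ max ‖A‖ ‖B‖ ^ 2 * ‖toLp 2 (x ∘ Sum.inl)‖ ^ 2 +
            max ‖A‖ ‖B‖ ^ 2 * ‖toLp 2 (x ∘ Sum.inr)‖ ^ 2 := by gcongr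
      _ = _ := by ring
  · refine (l2_opNorm_le_iff (norm_nonneg _)).2 fun u => ?_
    simpa [hmulVec, norm_sq_toLp_sumElim] using norm_sq_toLp_mulVec_le (fromBlocks A 0 0 B) (Sum.elim u 0)
  · refine (l2_opNorm_le_iff (norm_nonneg _)).2 fun w => ?_
    simpa [hmulVec, norm_sq_toLp_sumElim] using norm_sq_toLp_mulVec_le (fromBlocks A 0 0 B) (Sum.elim 0 w)

lemma det_one_sub_reindex_fromBlocks_mul {R ι κ ν : Type*} [CommRing R] [Fintype ι] [Fintype κ]
    [Fintype ν] [DecidableEq ι] [DecidableEq κ] [DecidableEq ν] (e : ι ⊕ κ ≃ ν)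
    (A₁ B₁ : Matrix ι ι R) (A₂ B₂ : Matrix κ κ R) :
    (1 - reindex e e (fromBlocks A₁ 0 0 A₂) * reindex e e (fromBlocks B₁ 0 0 B₂)).det =
      (1 - A₁ * B₁).det * (1 - A₂ * B₂).det := by
  have hblocks : 1 - fromBlocks A₁ 0 0 A₂ * fromBlocks B₁ 0 0 B₂ =
      fromBlocks (1 - A₁ * B₁) 0 0 (1 - A₂ * B₂) := by
    ext (i | i) (j | j) <;> simp [fromBlocks_multiply, one_apply]
  rw [← coe_reindexAlgEquiv R R, ← map_mul, ← map_one (reindexAlgEquiv R R e), ← map_sub,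
    coe_reindexAlgEquiv, det_reindex_self, hblocks, det_fromBlocks_zero₂₁]

end Matrix

lemma opNorm_eq_l2_opNorm {m : ℕ} (K : Matrix (Fin m) (Fin m) ℂ) : opNorm K = ‖K‖ := rfl

/-- Sends the four coordinate blocks of `Fin (a + b) ⊕ Fin (c + d)` to the order `a, c, b, d`. -/
def finAddSumFinAddEquiv (a b c d : ℕ) : Fin (a + b) ⊕ Fin (c + d) ≃ Fin ((a + c) + (b + d)) :=
  (Equiv.sumCongr finSumFinEquiv.symm finSumFinEquiv.symm).trans <|
  (Equiv.sumSumSumComm (Fin a) (Fin b) (Fin c) (Fin d)).trans <|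
  (Equiv.sumCongr finSumFinEquiv finSumFinEquiv).trans finSumFinEquiv

lemma finAddSumFinAddEquiv_inl_lt_iff (a b c d : ℕ) (x : Fin (a + b)) :
    (finAddSumFinAddEquiv a b c d (Sum.inl x) : ℕ) < a + c ↔ (x : ℕ) < a := by
  cases x using Fin.addCases <;> simp [finAddSumFinAddEquiv, Nat.lt_add_right]

lemma finAddSumFinAddEquiv_inr_lt_iff (a b c d : ℕ) (y : Fin (c + d)) :
    (finAddSumFinAddEquiv a b c d (Sum.inr y) : ℕ) < a + c ↔ (y : ℕ) < c := by
  cases y using Fin.addCases <;> simp [finAddSumFinAddEquiv]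

lemma Zn_add_add (a b c d : ℕ) (z1 z2 : ℂ) :
    Zn (a + c) (b + d) z1 z2 =
      reindex (finAddSumFinAddEquiv a b c d) (finAddSumFinAddEquiv a b c d)
        (fromBlocks (Zn a b z1 z2) 0 0 (Zn c d z1 z2)) := by
  rw [Zn, Zn, Zn, fromBlocks_diagonal, reindex_apply, submatrix_diagonal_equiv,
    diagonal_eq_diagonal_iff]
  intro i
  obtain ⟨x | y, rfl⟩ := (finAddSumFinAddEquiv a b c d).surjective i
  · simp [finAddSumFinAddEquiv_inl_lt_iff]
  · simp [finAddSumFinAddEquiv_inr_lt_iff]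

lemma eval_zero_eq_one_of_eq_det {p : MvPolynomial (Fin 2) ℂ} {n1 n2 : ℕ}
    {K : Matrix (Fin (n1 + n2)) (Fin (n1 + n2)) ℂ}
    (hK : ∀ z1 z2 : ℂ, eval ![z1, z2] p = (1 - K * Zn n1 n2 z1 z2).det) :
    eval ![0, 0] p = 1 := by
  simp [hK, Zn]

/-- `S` is `(0, a)`, `(0, a]` or `(0, ∞)` for some `a > 0`, or empty. -/
def IsPosInitialSegment (S : Set ℝ) : Prop :=
  S ⊆ Ioi 0 ∧ ∀ r ∈ S, Ioc 0 r ⊆ S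

namespace IsPosInitialSegment

variable {S T : Set ℝ}

lemma Ioi_subset_of_not_bddAbove (hS : IsPosInitialSegment S) (hb : ¬BddAbove S) :
    Ioi 0 ⊆ S := fun r hr => by
  obtain ⟨x, hx, hrx⟩ := not_bddAbove_iff.1 hb r
  exact hS.2 x hx ⟨hr, hrx.le⟩

lemma mem_of_lt_sSup (hS : IsPosInitialSegment S) (hne : S.Nonempty) {r : ℝ} (hr : 0 < r)
    (hlt : r < sSup S) : r ∈ S := by
  obtain ⟨x, hx, hrx⟩ := exists_lt_of_lt_csSup hne hlt
  exact hS.2 x hx ⟨hr, hrx.le⟩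

lemma sSup_inter_eq_min (hS : IsPosInitialSegment S) (hT : IsPosInitialSegment T)
    (hSne : S.Nonempty) (hTne : T.Nonempty) (hSb : BddAbove S) (hTb : BddAbove T) :
    sSup (S ∩ T) = min (sSup S) (sSup T) := by
  obtain ⟨s, hs⟩ := hSne
  obtain ⟨t, ht⟩ := hTne
  have hne : (S ∩ T).Nonempty := by
    have hpos : 0 < min s t := lt_min (hS.1 hs) (hT.1 ht)
    exact ⟨min s t, hS.2 s hs ⟨hpos, min_le_left _ _⟩, hT.2 t ht ⟨hpos, min_le_right _ _⟩⟩
  refine le_antisymm (le_min (csSup_le_csSup hSb hne inter_subset_left)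
    (csSup_le_csSup hTb hne inter_subset_right)) (le_of_forall_lt_imp_le_of_dense fun r hr => ?_)
  rcases le_or_gt r 0 with hr0 | hr0
  · exact hr0.trans (Real.sSup_nonneg fun x hx => (hS.1 hx.1).le)
  · exact le_csSup (hSb.mono inter_subset_left)
      ⟨hS.mem_of_lt_sSup ⟨s, hs⟩ hr0 (hr.trans_le (min_le_left _ _)),
        hT.mem_of_lt_sSup ⟨t, ht⟩ hr0 (hr.trans_le (min_le_right _ _))⟩

/-- `sSup` of an unbounded set is `0`, and its inverse `0` is the correct value of `∞⁻¹`. -/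
lemma inv_sSup_inter_of_not_bddAbove (hS : IsPosInitialSegment S) (hT : IsPosInitialSegment T)
    (hb : ¬BddAbove S) : (sSup (S ∩ T))⁻¹ = max (sSup S)⁻¹ (sSup T)⁻¹ := by
  rw [inter_eq_right.2 (hT.1.trans (hS.Ioi_subset_of_not_bddAbove hb)),
    Real.sSup_of_not_bddAbove hb, _root_.inv_zero, max_eq_right]
  exact inv_nonneg.2 (Real.sSup_nonneg fun x hx => (hT.1 hx).le)

lemma inv_sSup_inter (hS : IsPosInitialSegment S) (hT : IsPosInitialSegment T)
    (hSne : S.Nonempty) (hTne : T.Nonempty) :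
    (sSup (S ∩ T))⁻¹ = max (sSup S)⁻¹ (sSup T)⁻¹ := by
  by_cases hSb : BddAbove S
  · by_cases hTb : BddAbove T
    · obtain ⟨s, hs⟩ := hSne
      obtain ⟨t, ht⟩ := hTne
      have hSpos : 0 < sSup S := (hS.1 hs).trans_le (le_csSup hSb hs)
      have hTpos : 0 < sSup T := (hT.1 ht).trans_le (le_csSup hTb ht)
      rw [hS.sSup_inter_eq_min hT ⟨s, hs⟩ ⟨t, ht⟩ hSb hTb]
      rcases le_total (sSup S) (sSup T) with h | h
      · rw [min_eq_left h, max_eq_left (inv_anti₀ hSpos h)]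
      · rw [min_eq_right h, max_eq_right (inv_anti₀ hTpos h)]
    · rw [inter_comm, max_comm]
      exact hT.inv_sSup_inter_of_not_bddAbove hS hTb
  · exact hS.inv_sSup_inter_of_not_bddAbove hT hSb

end IsPosInitialSegment

def stableRadii (p : MvPolynomial (Fin 2) ℂ) : Set ℝ :=
  {r : ℝ | 0 < r ∧ ∀ z1 z2 : ℂ, ‖z1‖ < r → ‖z2‖ < r → eval ![z1, z2] p ≠ 0}

lemma stabilityRadius_eq_sSup_stableRadii (p : MvPolynomial (Fin 2) ℂ) :
    stabilityRadius p = sSup (stableRadii p) := rfl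

lemma isPosInitialSegment_stableRadii (p : MvPolynomial (Fin 2) ℂ) :
    IsPosInitialSegment (stableRadii p) :=
  ⟨fun _ hr => hr.1, fun _ hr _ hr' => ⟨hr'.1, fun z1 z2 h1 h2 =>
    hr.2 z1 z2 (h1.trans_le hr'.2) (h2.trans_le hr'.2)⟩⟩

lemma stableRadii_nonempty {p : MvPolynomial (Fin 2) ℂ} (hp : eval ![0, 0] p ≠ 0) :
    (stableRadii p).Nonempty := by
  have hp0 : eval 0 p ≠ 0 := by
    rwa [show (![0, 0] : Fin 2 → ℂ) = 0 by simp] at hp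
  obtain ⟨ε, hε, hball⟩ :=
    Metric.eventually_nhds_iff.1 ((continuous_eval p).continuousAt.eventually_ne hp0)
  refine ⟨ε, hε, fun z1 z2 h1 h2 => hball ?_⟩
  rw [dist_zero_right, pi_norm_lt_iff hε, Fin.forall_fin_two]
  exact ⟨h1, h2⟩

lemma stableRadii_mul (p q : MvPolynomial (Fin 2) ℂ) :
    stableRadii (p * q) = stableRadii p ∩ stableRadii q := by
  ext r
  simp only [stableRadii, mem_ofPred_eq, mem_inter_iff, map_mul, ne_eq, mul_eq_zero, not_or]
  constructor
  · rintro ⟨hr, h⟩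
    exact ⟨⟨hr, fun z1 z2 h1 h2 => (h z1 z2 h1 h2).1⟩, ⟨hr, fun z1 z2 h1 h2 => (h z1 z2 h1 h2).2⟩⟩
  · rintro ⟨⟨hr, hp⟩, ⟨-, hq⟩⟩
    exact ⟨hr, fun z1 z2 h1 h2 => ⟨hp z1 z2 h1 h2, hq z1 z2 h1 h2⟩⟩

lemma inv_stabilityRadius_mul {p q : MvPolynomial (Fin 2) ℂ} (hp : eval ![0, 0] p ≠ 0)
    (hq : eval ![0, 0] q ≠ 0) :
    (stabilityRadius (p * q))⁻¹ = max (stabilityRadius p)⁻¹ (stabilityRadius q)⁻¹ := by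
  simp only [stabilityRadius_eq_sSup_stableRadii, stableRadii_mul]
  exact (isPosInitialSegment_stableRadii p).inv_sSup_inter (isPosInitialSegment_stableRadii q)
    (stableRadii_nonempty hp) (stableRadii_nonempty hq)

theorem stmt3_general (n1' n2' n1'' n2'' : ℕ) (p1 p2 : MvPolynomial (Fin 2) ℂ)
    (K1 : Matrix (Fin (n1' + n2')) (Fin (n1' + n2')) ℂ)
    (hK1n : opNorm K1 = (stabilityRadius p1)⁻¹)
    (hK1 : ∀ z1 z2 : ℂ, eval ![z1, z2] p1 = (1 - K1 * Zn n1' n2' z1 z2).det)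
    (K2 : Matrix (Fin (n1'' + n2'')) (Fin (n1'' + n2'')) ℂ)
    (hK2n : opNorm K2 = (stabilityRadius p2)⁻¹)
    (hK2 : ∀ z1 z2 : ℂ, eval ![z1, z2] p2 = (1 - K2 * Zn n1'' n2'' z1 z2).det) :
    ∃ K : Matrix (Fin ((n1' + n1'') + (n2' + n2''))) (Fin ((n1' + n1'') + (n2' + n2''))) ℂ,
      opNorm K = (stabilityRadius (p1 * p2))⁻¹ ∧
      ∀ z1 z2 : ℂ, eval ![z1, z2] p1 * eval ![z1, z2] p2 =
        (1 - K * Zn (n1' + n1'') (n2' + n2'') z1 z2).det := by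
  set e := finAddSumFinAddEquiv n1' n2' n1'' n2''
  refine ⟨reindex e e (fromBlocks K1 0 0 K2), ?_, fun z1 z2 => ?_⟩
  · rw [opNorm_eq_l2_opNorm] at hK1n hK2n ⊢
    rw [l2_opNorm_reindex, l2_opNorm_fromBlocks_zero, hK1n, hK2n, inv_stabilityRadius_mul
      (by simp [eval_zero_eq_one_of_eq_det hK1]) (by simp [eval_zero_eq_one_of_eq_det hK2])]
  · rw [hK1, hK2, Zn_add_add, det_one_sub_reindex_fromBlocks_mul]

theorem stmt3 (n1' n2' n1'' n2'' : ℕ) (p1 p2 : MvPolynomial (Fin 2) ℂ)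
    (hnc1 : 0 < p1.totalDegree) (hnc2 : 0 < p2.totalDegree)
    (h01 : coeff 0 p1 = 1) (h02 : coeff 0 p2 = 1)
    (hd1 : p1.degreeOf 0 = n1') (hd2 : p1.degreeOf 1 = n2')
    (hd3 : p2.degreeOf 0 = n1'') (hd4 : p2.degreeOf 1 = n2'')
    (K1 : Matrix (Fin (n1' + n2')) (Fin (n1' + n2')) ℂ)
    (hK1n : opNorm K1 = (stabilityRadius p1)⁻¹)
    (hK1 : ∀ z1 z2 : ℂ, eval ![z1, z2] p1 = (1 - K1 * Zn n1' n2' z1 z2).det)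
    (K2 : Matrix (Fin (n1'' + n2'')) (Fin (n1'' + n2'')) ℂ)
    (hK2n : opNorm K2 = (stabilityRadius p2)⁻¹)
    (hK2 : ∀ z1 z2 : ℂ, eval ![z1, z2] p2 = (1 - K2 * Zn n1'' n2'' z1 z2).det) :
    ∃ K : Matrix (Fin ((n1' + n1'') + (n2' + n2''))) (Fin ((n1' + n1'') + (n2' + n2''))) ℂ,
      opNorm K = (stabilityRadius (p1 * p2))⁻¹ ∧
      ∀ z1 z2 : ℂ, eval ![z1, z2] p1 * eval ![z1, z2] p2 =
        (1 - K * Zn (n1' + n1'') (n2' + n2'') z1 z2).det :=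
  stmt3_general n1' n2' n1'' n2'' p1 p2 K1 hK1n hK1 K2 hK2n hK2
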